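/- arXiv:0707.1808 — 4 statements merged into one kernel-verified Lean document; each statement's English description precedes it below -/
import Mathlib

section
/- Let r, s ∈ (0,∞) with s < r and let X be an ℝ^d-valued random variable with distribution P = f·λ_d such that E|X|^{r+η} < ∞ for some η > 0. Let θ > 0, μ ∈ ℝ^d, assume (θ,μ) is P-admissible, and let (α_n)_{n≥1} be an asymptotically L^r(P)-optimal sequence of quantizers. If ∫_{{f>0}} f_{θ,μ}^{r/(r−s)} · f^{−s/(r−s)} dλ_d < ∞, then (α_n^{θ,μ})_{n≥1} is L^s(P)-rate-optimal, and moreover limsup_{n→∞} n^{s/d} ∫ d(x, α_n^{θ,μ})^s dP(x) ≤ θ^{s+d} · Q_r(P)^{s/r} · (∫_{{f>0}} f_{θ,μ}^{r/(r−s)} f^{−s/(r−s)} dλ_d)^{1−s/r}. -/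
/-!
The substitution `y = μ + θ⁻¹ (x - μ)` turns the `L^s(P)`-error of the dilated codebook
`α^{θ,μ}` into `θ^{s+d} ∫ f_{θ,μ}(y) d(y,α)^s dy`, and admissibility confines this
integral to `{f > 0}`. There the integrand factors as
`(d(·,α)^r f)^{s/r} · (f_{θ,μ}^{r/(r-s)} f^{-s/(r-s)})^{1-s/r}`, so Hölder's inequality
bounds it by `θ^{s+d} (∫ d(·,α)^r dP)^{s/r} I^{1-s/r}`. Since `n^{s/d} = (n^{r/d})^{s/r}`,
the limsup bound follows along the asymptotically `L^r`-optimal sequence. The bound is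
finite because `Q_r(P)` is: the same Hölder inequality, applied to `f^{d/(d+r)}` against
the weight `(1 + |x|)^{r+η}`, reduces `∫ f^{d/(d+r)}` to the moment of order `r + η` and
to `∫ (1 + |x|)^{-(r+η)d/r} < ∞`.
-/

open MeasureTheory ENNReal Filter Set Metric Topology
open scoped Classical

noncomputable section

/-- Distance from a point `x` to a finite codebook `α`. -/
def qdist {d : ℕ} (x : EuclideanSpace ℝ (Fin d)) (α : Finset (EuclideanSpace ℝ (Fin d))) : ℝ :=
  Metric.infDist x (α : Set (EuclideanSpace ℝ (Fin d)))

/-- The `r`-th power `L^r` quantization error `∫ d(x,α)^r dP` of a codebook `α`. -/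
def qerr {d : ℕ} (P : Measure (EuclideanSpace ℝ (Fin d))) (r : ℝ)
    (α : Finset (EuclideanSpace ℝ (Fin d))) : ℝ≥0∞ :=
  ∫⁻ x, ENNReal.ofReal (qdist x α) ^ r ∂P

/-- The optimal `n`-level `L^r` quantization error `e_{n,r}(P)`. -/
def enr {d : ℕ} (P : Measure (EuclideanSpace ℝ (Fin d))) (r : ℝ) (n : ℕ) : ℝ≥0∞ :=
  ⨅ (α : Finset (EuclideanSpace ℝ (Fin d))) (_ : α.Nonempty) (_ : α.card ≤ n),
    qerr P r α ^ (1 / r)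

/-- The uniform distribution on the unit cube `[0,1]^d`. -/
def unifCube (d : ℕ) : Measure (EuclideanSpace ℝ (Fin d)) :=
  volume.restrict {x | ∀ i, x i ∈ Icc (0 : ℝ) 1}

/-- The constant `J_{r,d} = inf_{n ≥ 1} n^{r/d} e_{n,r}(U([0,1]^d))^r`. -/
def Jrd (r : ℝ) (d : ℕ) : ℝ≥0∞ :=
  ⨅ (n : ℕ) (_ : 1 ≤ n), (n : ℝ≥0∞) ^ (r / (d : ℝ)) * enr (unifCube d) r n ^ r

/-- Zador's constant `Q_r(P)` for a measure whose a.c. part has density `f`. -/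
def Qr {d : ℕ} (f : EuclideanSpace ℝ (Fin d) → ℝ) (r : ℝ) : ℝ≥0∞ :=
  Jrd r d * (∫⁻ x, ENNReal.ofReal (f x) ^ ((d : ℝ) / ((d : ℝ) + r))) ^ (((d : ℝ) + r) / (d : ℝ))

/-- The dilated/contracted codebook `α^{θ,μ} = μ + θ(α - μ)`. -/
def dilate {d : ℕ} (α : Finset (EuclideanSpace ℝ (Fin d))) (θ : ℝ)
    (μ : EuclideanSpace ℝ (Fin d)) : Finset (EuclideanSpace ℝ (Fin d)) :=
  α.image fun a => μ + θ • (a - μ)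

/-- `f_{θ,μ}(x) = f(μ + θ(x-μ))`. -/
def fdil {d : ℕ} (f : EuclideanSpace ℝ (Fin d) → ℝ) (θ : ℝ)
    (μ x : EuclideanSpace ℝ (Fin d)) : ℝ :=
  f (μ + θ • (x - μ))

/-- The image measure `P_{θ,μ}` of `P` under `x ↦ (x-μ)/θ + μ`. -/
def Pdil {d : ℕ} (P : Measure (EuclideanSpace ℝ (Fin d))) (θ : ℝ)
    (μ : EuclideanSpace ℝ (Fin d)) : Measure (EuclideanSpace ℝ (Fin d)) :=
  Measure.map (fun x => μ + θ⁻¹ • (x - μ)) P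

/-- `(θ,μ)` is `P`-admissible for `P = f·λ_d`:
`{f>0} ⊆ μ(1-θ) + θ{f>0}` up to a `λ_d`-null set.  (Note that
`x ∈ μ(1-θ) + θ{f>0}` iff `f((x-μ)/θ + μ) > 0`.) -/
def Admissible {d : ℕ} (f : EuclideanSpace ℝ (Fin d) → ℝ) (θ : ℝ)
    (μ : EuclideanSpace ℝ (Fin d)) : Prop :=
  ∀ᵐ x ∂(volume : Measure (EuclideanSpace ℝ (Fin d))),
    0 < f x → 0 < f (μ + θ⁻¹ • (x - μ))

/-- The maximal function `ψ_b` attached to `P` and the sequence of codebooks `α`. -/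
def maxFun {d : ℕ} (P : Measure (EuclideanSpace ℝ (Fin d)))
    (α : ℕ → Finset (EuclideanSpace ℝ (Fin d))) (b : ℝ)
    (x : EuclideanSpace ℝ (Fin d)) : ℝ≥0∞ :=
  ⨆ (n : ℕ) (_ : 1 ≤ n),
    volume (Metric.ball x (b * qdist x (α n))) / P (Metric.ball x (b * qdist x (α n)))

/-- An `L^r(P)`-optimal sequence of `n`-quantizers. -/
def OptimalSeq {d : ℕ} (P : Measure (EuclideanSpace ℝ (Fin d))) (r : ℝ)
    (α : ℕ → Finset (EuclideanSpace ℝ (Fin d))) : Prop :=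
  ∀ n, 1 ≤ n → (α n).Nonempty ∧ (α n).card ≤ n ∧ qerr P r (α n) = enr P r n ^ r

/-- An asymptotically `L^r(P)`-optimal sequence of quantizers,
for `P` whose a.c. part has density `f`. -/
def AsympOptimalSeq {d : ℕ} (P : Measure (EuclideanSpace ℝ (Fin d)))
    (f : EuclideanSpace ℝ (Fin d) → ℝ) (r : ℝ)
    (α : ℕ → Finset (EuclideanSpace ℝ (Fin d))) : Prop :=
  (∀ n, 1 ≤ n → (α n).Nonempty ∧ (α n).card ≤ n) ∧
  Tendsto (fun n : ℕ => (n : ℝ≥0∞) ^ (r / (d : ℝ)) * qerr P r (α n)) atTop (𝓝 (Qr f r))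

/-- `L^s(P)`-rate-optimality of a sequence of codebooks. -/
def RateOptimal {d : ℕ} (P : Measure (EuclideanSpace ℝ (Fin d))) (s : ℝ)
    (β : ℕ → Finset (EuclideanSpace ℝ (Fin d))) : Prop :=
  limsup (fun n : ℕ => (n : ℝ≥0∞) ^ (s / (d : ℝ)) * qerr P s (β n)) atTop < ⊤

/-- The support of a measure. -/
def msupp {d : ℕ} (P : Measure (EuclideanSpace ℝ (Fin d))) : Set (EuclideanSpace ℝ (Fin d)) :=
  {x | ∀ ε > 0, 0 < P (Metric.ball x ε)}

/-- Hypothesis (H1): for every `M > 0`,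
`sup { f(μ+θ(z-μ))/f(z) : z ∈ B(0,M), f(z) > 0 } < ∞`. -/
def H1 {d : ℕ} (f : EuclideanSpace ℝ (Fin d) → ℝ) (θ : ℝ)
    (μ : EuclideanSpace ℝ (Fin d)) : Prop :=
  ∀ M > (0 : ℝ), ∃ C : ℝ, ∀ z ∈ Metric.ball (0 : EuclideanSpace ℝ (Fin d)) M,
    0 < f z → f (μ + θ • (z - μ)) / f z ≤ C

/-- Hypothesis (H2). -/
def H2 {d : ℕ} (P : Measure (EuclideanSpace ℝ (Fin d))) (θ : ℝ)
    (μ : EuclideanSpace ℝ (Fin d)) (s r : ℝ) : Prop :=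
  ∃ b ∈ Ioo (0 : ℝ) (1 / 2), ∃ M > (0 : ℝ),
    (∫⁻ x in {x : EuclideanSpace ℝ (Fin d) | M < ‖x‖},
      (⨆ t ∈ Ioc (0 : ℝ) (2 * b * ‖x‖),
        volume (Metric.ball x t) / P (Metric.ball x t)) ^ (s / ((d : ℝ) + r))
      ∂(Pdil P θ μ)) < ⊤

/-- Hypothesis (H3): `λ_d(· ∩ supp P) ≪ P` and `supp P` is a finite union of
closed convex sets. -/
def H3 {d : ℕ} (P : Measure (EuclideanSpace ℝ (Fin d))) : Prop :=
  volume.restrict (msupp P) ≪ P ∧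
  ∃ (k : ℕ) (C : Fin k → Set (EuclideanSpace ℝ (Fin d))),
    (∀ i, IsClosed (C i) ∧ Convex ℝ (C i)) ∧ msupp P = ⋃ i, C i


section Homothety

variable {E : Type*} [NormedAddCommGroup E] [NormedSpace ℝ E]

theorem infDist_homothety_image (c x : E) {t : ℝ} (ht : t ≠ 0) (s : Set E) :
    infDist (c + t • (x - c)) ((fun a => c + t • (a - c)) '' s) = |t| * infDist x s := by
  have hcomp : (fun a => c + t • (a - c)) = (c + ·) ∘ (t • ·) ∘ (· - c) := rfl
  rw [hcomp, image_comp, image_comp, image_smul, infDist_image (isometry_add_left c),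
    infDist_smul₀ ht, Real.norm_eq_abs]
  exact congrArg _ (infDist_image (IsometryEquiv.subRight c).isometry)

variable [MeasurableSpace E] [BorelSpace E] [FiniteDimensional ℝ E]
  (ν : Measure E) [ν.IsAddHaarMeasure]

theorem map_homothety (c : E) {t : ℝ} (ht : t ≠ 0) :
    ν.map (fun x => c + t • (x - c)) =
      ENNReal.ofReal |(t ^ Module.finrank ℝ E)⁻¹| • ν := by
  ext s hs
  have hpre : (fun x => c + t • (x - c)) ⁻¹' s = AffineMap.homothety c t⁻¹ '' s := by
    refine (congrFun (image_eq_preimage_of_inverse (fun y => ?_) (fun y => ?_)) s).symm <;>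
      simp [AffineMap.homothety_apply, smul_smul, ht]
  rw [Measure.map_apply (by fun_prop) hs, hpre, Measure.addHaar_image_homothety, inv_pow,
    Measure.smul_apply, smul_eq_mul]

theorem lintegral_comp_homothety (c : E) {t : ℝ} (ht : t ≠ 0) {h : E → ℝ≥0∞}
    (hh : Measurable h) :
    ∫⁻ x, h (c + t • (x - c)) ∂ν =
      ENNReal.ofReal |(t ^ Module.finrank ℝ E)⁻¹| * ∫⁻ x, h x ∂ν := by
  rw [← lintegral_map hh (by fun_prop), map_homothety ν c ht, lintegral_smul_measure,
    smul_eq_mul]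

theorem quasiMeasurePreserving_homothety (c : E) {t : ℝ} (ht : t ≠ 0) :
    Measure.QuasiMeasurePreserving (fun x => c + t • (x - c)) ν ν :=
  ⟨by fun_prop, by rw [map_homothety ν c ht]; exact Measure.smul_absolutelyContinuous⟩

end Homothety

section Holder

variable {X : Type*} [MeasurableSpace X] {ν : Measure X}

theorem lintegral_mul_rpow_le_of_weight {s r : ℝ} (hs : 0 ≤ s) (hsr : s < r)
    {v g w : X → ℝ≥0∞} (hv : AEMeasurable v ν) (hg : AEMeasurable g ν)
    (hw : AEMeasurable w ν) (hw0 : ∀ᵐ x ∂ν, w x ≠ 0) (hwt : ∀ᵐ x ∂ν, w x ≠ ⊤) :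
    ∫⁻ x, v x * g x ^ s ∂ν ≤
      (∫⁻ x, g x ^ r * w x ∂ν) ^ (s / r) *
        (∫⁻ x, v x ^ (r / (r - s)) * w x ^ (-(s / (r - s))) ∂ν) ^ (1 - s / r) := by
  have hr : 0 < r := hs.trans_lt hsr
  have hrs : r - s ≠ 0 := (sub_pos.2 hsr).ne'
  have hexp : 0 ≤ 1 - s / r := by rw [sub_nonneg, div_le_one hr]; exact hsr.le
  have hsplit : ∀ᵐ x ∂ν, v x * g x ^ s = (g x ^ r * w x) ^ (s / r) *
      (v x ^ (r / (r - s)) * w x ^ (-(s / (r - s)))) ^ (1 - s / r) := by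
    filter_upwards [hw0, hwt] with x hx0 hxt
    have hcancel : w x ^ (s / r) * w x ^ (-(s / r)) = 1 := by
      rw [← ENNReal.rpow_add _ _ hx0 hxt, add_neg_cancel, ENNReal.rpow_zero]
    rw [ENNReal.mul_rpow_of_nonneg _ _ (by positivity), ENNReal.mul_rpow_of_nonneg _ _ hexp,
      ← ENNReal.rpow_mul, ← ENNReal.rpow_mul, ← ENNReal.rpow_mul,
      show r * (s / r) = s by field_simp, show r / (r - s) * (1 - s / r) = 1 by field_simp,
      show -(s / (r - s)) * (1 - s / r) = -(s / r) by field_simp, ENNReal.rpow_one]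
    calc v x * g x ^ s = v x * g x ^ s * (w x ^ (s / r) * w x ^ (-(s / r))) := by
          rw [hcancel, mul_one]
      _ = _ := by ring
  rw [lintegral_congr_ae hsplit]
  exact ENNReal.lintegral_mul_norm_pow_le ((hg.pow_const r).mul hw)
    ((hv.pow_const _).mul (hw.pow_const _)) (by positivity) hexp (by ring)

end Holder

theorem ENNReal.one_add_rpow_le (t : ℝ≥0∞) {p : ℝ} (hp : 0 ≤ p) :
    (1 + t) ^ p ≤ 2 ^ p * (1 + t ^ p) := by
  calc (1 + t) ^ p ≤ (2 * max 1 t) ^ p := by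
        rw [two_mul]; gcongr; exacts [le_max_left _ _, le_max_right _ _]
    _ = 2 ^ p * max 1 t ^ p := ENNReal.mul_rpow_of_nonneg _ _ hp
    _ ≤ 2 ^ p * (1 + t ^ p) := by
        gcongr
        rcases le_total 1 t with h | h
        · rw [max_eq_right h]; exact le_add_self
        · rw [max_eq_left h, ENNReal.one_rpow]; exact le_self_add

section Moment

variable {E : Type*} [NormedAddCommGroup E] [NormedSpace ℝ E] [MeasurableSpace E] [BorelSpace E]
  [FiniteDimensional ℝ E] {ν : Measure E} [ν.IsAddHaarMeasure]

theorem lintegral_rpow_density_lt_top {w : E → ℝ≥0∞} (hw : AEMeasurable w ν)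
    [IsFiniteMeasure (ν.withDensity w)] {a p : ℝ} (ha0 : 0 < a) (ha1 : a < 1) (hp : 0 ≤ p)
    (hdim : (Module.finrank ℝ E : ℝ) < p * (a / (1 - a)))
    (hmom : ∫⁻ x, ‖x‖ₑ ^ p ∂(ν.withDensity w) ≠ ⊤) :
    ∫⁻ x, w x ^ a ∂ν < ⊤ := by
  set W : E → ℝ≥0∞ := fun x => (1 + ‖x‖ₑ) ^ p
  have hW : Measurable W := by fun_prop
  have hholder := lintegral_mul_rpow_le_of_weight (ν := ν) (v := fun _ => 1) ha0.le ha1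
    aemeasurable_const hw hW.aemeasurable
    (ae_of_all _ fun x => by positivity) (ae_of_all _ fun x => by finiteness)
  simp only [one_mul, ENNReal.rpow_one, ENNReal.one_rpow, div_one] at hholder
  have hfirst : ∫⁻ x, w x * W x ∂ν < ⊤ := by
    rw [← Pi.mul_def, ← lintegral_withDensity_eq_lintegral_mul₀ hw hW.aemeasurable]
    calc ∫⁻ x, W x ∂(ν.withDensity w)
        ≤ ∫⁻ x, 2 ^ p * (1 + ‖x‖ₑ ^ p) ∂(ν.withDensity w) :=
          lintegral_mono fun x => ENNReal.one_add_rpow_le _ hp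
      _ = 2 ^ p * (ν.withDensity w univ + ∫⁻ x, ‖x‖ₑ ^ p ∂(ν.withDensity w)) := by
          rw [lintegral_const_mul _ (by fun_prop), lintegral_add_left measurable_const,
            lintegral_const, one_mul]
      _ < ⊤ := by finiteness
  have hsecond : ∫⁻ x, W x ^ (-(a / (1 - a))) ∂ν < ⊤ := by
    have hpow : ∀ x : E,
        W x ^ (-(a / (1 - a))) = ENNReal.ofReal ((1 + ‖x‖) ^ (-(p * (a / (1 - a))))) := by
      intro x
      rw [← ENNReal.rpow_mul, ← ofReal_norm, ← ENNReal.ofReal_one,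
        ← ENNReal.ofReal_add zero_le_one (norm_nonneg x),
        ENNReal.ofReal_rpow_of_pos (by positivity), mul_neg]
    simp_rw [hpow]
    exact finite_integral_one_add_norm hdim
  refine hholder.trans_lt (ENNReal.mul_lt_top ?_ ?_)
  · exact ENNReal.rpow_lt_top_of_nonneg ha0.le hfirst.ne
  · exact ENNReal.rpow_lt_top_of_nonneg (by linarith) hsecond.ne

end Moment

section Quantization

variable {d : ℕ}

@[fun_prop]
theorem continuous_qdist (α : Finset (EuclideanSpace ℝ (Fin d))) :
    Continuous fun x => qdist x α :=
  continuous_infDist_pt _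

theorem qdist_dilate {θ : ℝ} (hθ : θ ≠ 0) (μ : EuclideanSpace ℝ (Fin d))
    (α : Finset (EuclideanSpace ℝ (Fin d))) (x : EuclideanSpace ℝ (Fin d)) :
    qdist x (dilate α θ μ) = |θ| * qdist (μ + θ⁻¹ • (x - μ)) α := by
  have hx : μ + θ • ((μ + θ⁻¹ • (x - μ)) - μ) = x := by simp [smul_smul, hθ]
  rw [qdist, dilate, Finset.coe_image]
  conv_lhs => rw [← hx]
  exact infDist_homothety_image μ _ hθ _

theorem qerr_withDensity_dilate {w : EuclideanSpace ℝ (Fin d) → ℝ≥0∞} (hw : Measurable w)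
    (s : ℝ) {θ : ℝ} (hθ : 0 < θ) (μ : EuclideanSpace ℝ (Fin d))
    (α : Finset (EuclideanSpace ℝ (Fin d))) :
    qerr (volume.withDensity w) s (dilate α θ μ) =
      ENNReal.ofReal θ ^ (s + d) *
        ∫⁻ y, w (μ + θ • (y - μ)) * ENNReal.ofReal (qdist y α) ^ s := by
  set H : EuclideanSpace ℝ (Fin d) → ℝ≥0∞ :=
    fun y => w (μ + θ • (y - μ)) * ENNReal.ofReal (qdist y α) ^ s
  have hH : Measurable H := by fun_prop
  have hpoint : ∀ x, ENNReal.ofReal (qdist x (dilate α θ μ)) ^ s * w x =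
      ENNReal.ofReal θ ^ s * H (μ + θ⁻¹ • (x - μ)) := by
    intro x
    have hx : μ + θ • ((μ + θ⁻¹ • (x - μ)) - μ) = x := by simp [smul_smul, hθ.ne']
    rw [qdist_dilate hθ.ne', abs_of_pos hθ, ENNReal.ofReal_mul hθ.le,
      ENNReal.mul_rpow_of_ne_top ENNReal.ofReal_ne_top ENNReal.ofReal_ne_top]
    simp only [H, hx]
    ring
  rw [qerr, lintegral_withDensity_eq_lintegral_mul₀ hw.aemeasurable (by fun_prop)]
  simp_rw [Pi.mul_apply, mul_comm (w _), hpoint]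
  rw [lintegral_const_mul _ (by fun_prop),
    lintegral_comp_homothety volume μ (inv_ne_zero hθ.ne') hH, finrank_euclideanSpace_fin,
    inv_pow, inv_inv, abs_of_pos (by positivity), ← mul_assoc,
    ENNReal.rpow_add _ _ (by simpa using hθ) ENNReal.ofReal_ne_top, ENNReal.rpow_natCast,
    ENNReal.ofReal_pow hθ.le]

theorem Admissible.ae_pos_of_fdil_pos {f : EuclideanSpace ℝ (Fin d) → ℝ} {θ : ℝ}
    {μ : EuclideanSpace ℝ (Fin d)} (h : Admissible f θ μ) (hθ : θ ≠ 0) :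
    ∀ᵐ y, 0 < fdil f θ μ y → 0 < f y := by
  filter_upwards [(quasiMeasurePreserving_homothety volume μ hθ).ae h] with y hy
  simpa [fdil, smul_smul, hθ] using hy

theorem qerr_dilate_le {s r : ℝ} (hs : 0 ≤ s) (hsr : s < r)
    {f : EuclideanSpace ℝ (Fin d) → ℝ} (hfm : Measurable f) {θ : ℝ} (hθ : 0 < θ)
    {μ : EuclideanSpace ℝ (Fin d)} (hadm : Admissible f θ μ)
    (α : Finset (EuclideanSpace ℝ (Fin d))) :
    qerr (volume.withDensity fun x => ENNReal.ofReal (f x)) s (dilate α θ μ) ≤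
      ENNReal.ofReal θ ^ (s + d : ℝ) *
        qerr (volume.withDensity fun x => ENNReal.ofReal (f x)) r α ^ (s / r) *
        (∫⁻ x in {x | 0 < f x},
          ENNReal.ofReal (fdil f θ μ x) ^ (r / (r - s)) *
            ENNReal.ofReal (f x) ^ (-(s / (r - s)))) ^ (1 - s / r) := by
  have hpos : MeasurableSet {x : EuclideanSpace ℝ (Fin d) | 0 < f x} :=
    measurableSet_lt measurable_const hfm
  have hfdil : Measurable (fdil f θ μ) := hfm.comp (by fun_prop)
  have hsupp : ∫⁻ y, ENNReal.ofReal (fdil f θ μ y) * ENNReal.ofReal (qdist y α) ^ s =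
      ∫⁻ y in {x | 0 < f x},
        ENNReal.ofReal (fdil f θ μ y) * ENNReal.ofReal (qdist y α) ^ s := by
    rw [← lintegral_indicator hpos]
    refine lintegral_congr_ae ?_
    filter_upwards [hadm.ae_pos_of_fdil_pos hθ.ne'] with y hy
    by_cases hfy : 0 < f y
    · rw [indicator_of_mem (show y ∈ {x | 0 < f x} from hfy)]
    · rw [indicator_of_notMem (show y ∉ {x | 0 < f x} from hfy),
        ENNReal.ofReal_of_nonpos (not_lt.1 (mt hy hfy)), zero_mul]
  have hqerr : qerr (volume.withDensity fun x => ENNReal.ofReal (f x)) r α =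
      ∫⁻ y, ENNReal.ofReal (qdist y α) ^ r * ENNReal.ofReal (f y) := by
    rw [qerr, lintegral_withDensity_eq_lintegral_mul₀ (by fun_prop) (by fun_prop)]
    simp_rw [Pi.mul_apply, mul_comm]
  rw [qerr_withDensity_dilate hfm.ennreal_ofReal _ hθ, mul_assoc]
  refine mul_le_mul_right ?_ _
  calc
    _ = _ := hsupp
    _ ≤ _ := lintegral_mul_rpow_le_of_weight (v := fun y => ENNReal.ofReal (fdil f θ μ y))
          (g := fun y => ENNReal.ofReal (qdist y α)) (w := fun y => ENNReal.ofReal (f y))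
          hs hsr (by fun_prop) (by fun_prop) (by fun_prop)
          ((ae_restrict_iff' hpos).2 (ae_of_all _ fun y hy => by simpa using hy))
          (ae_of_all _ fun _ => ENNReal.ofReal_ne_top)
    _ ≤ _ := by
      rw [hqerr]
      gcongr ?_ ^ _ * _
      · exact div_nonneg hs (hs.trans hsr.le)
      · exact setLIntegral_le_lintegral _ _

end Quantization

section Zador

variable {d : ℕ}

theorem isCompact_unitCube (d : ℕ) :
    IsCompact {x : EuclideanSpace ℝ (Fin d) | ∀ i, x i ∈ Icc (0 : ℝ) 1} := by
  have h := (EuclideanSpace.equiv (Fin d) ℝ).toHomeomorph.isCompact_preimage.2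
    (isCompact_univ_pi fun _ => isCompact_Icc (a := (0 : ℝ)) (b := 1))
  simpa [Set.preimage, Set.pi] using h

theorem qerr_restrict_lt_top {K : Set (EuclideanSpace ℝ (Fin d))} (hK : IsCompact K) {r : ℝ}
    (hr : 0 ≤ r) (α : Finset (EuclideanSpace ℝ (Fin d))) :
    qerr (volume.restrict K) r α < ⊤ := by
  have hcont : Continuous fun x => (qdist x α).toNNReal ^ r :=
    (NNReal.continuous_rpow_const hr).comp (continuous_real_toNNReal.comp (continuous_qdist α))
  have h := setLIntegral_lt_top_of_isCompact (μ := volume) hK.measure_lt_top.ne hK hcont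
  simpa [qerr, ENNReal.coe_rpow_of_nonneg _ hr, ENNReal.ofReal] using h

theorem enr_rpow_le_qerr (P : Measure (EuclideanSpace ℝ (Fin d))) {r : ℝ} (hr : 0 < r) {n : ℕ}
    {α : Finset (EuclideanSpace ℝ (Fin d))} (hα : α.Nonempty) (hn : α.card ≤ n) :
    enr P r n ^ r ≤ qerr P r α := by
  calc enr P r n ^ r ≤ (qerr P r α ^ (1 / r)) ^ r :=
        ENNReal.rpow_le_rpow (iInf₂_le_of_le α hα (iInf_le _ hn)) hr.le
    _ = qerr P r α := by rw [← ENNReal.rpow_mul, one_div_mul_cancel hr.ne', ENNReal.rpow_one]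

theorem Jrd_lt_top {r : ℝ} (hr : 0 < r) : Jrd r d < ⊤ :=
  calc Jrd r d ≤ ((1 : ℕ) : ℝ≥0∞) ^ (r / d) * enr (unifCube d) r 1 ^ r :=
        iInf₂_le 1 le_rfl
    _ ≤ qerr (unifCube d) r {0} := by
        simpa using enr_rpow_le_qerr (unifCube d) hr (Finset.singleton_nonempty 0) le_rfl
    _ < ⊤ := qerr_restrict_lt_top (isCompact_unitCube d) hr.le _

theorem Qr_lt_top (hd : 1 ≤ d) {f : EuclideanSpace ℝ (Fin d) → ℝ} (hfm : Measurable f)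
    [IsFiniteMeasure (volume.withDensity fun x => ENNReal.ofReal (f x))] {r p : ℝ} (hr : 0 < r)
    (hrp : r < p)
    (hmom : ∫⁻ x, ‖x‖ₑ ^ p ∂(volume.withDensity fun x => ENNReal.ofReal (f x)) ≠ ⊤) :
    Qr f r < ⊤ := by
  have hd' : (0 : ℝ) < d := by exact_mod_cast hd
  have hratio : (d : ℝ) / (d + r) / (1 - d / (d + r)) = d / r := by
    field_simp
    rw [add_sub_cancel_left, div_self hr.ne']
  have hdim : (Module.finrank ℝ (EuclideanSpace ℝ (Fin d)) : ℝ) <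
      p * (d / (d + r) / (1 - d / (d + r))) := by
    rw [finrank_euclideanSpace_fin, hratio, ← mul_div_assoc, lt_div_iff₀ hr]
    nlinarith
  have hdensity := lintegral_rpow_density_lt_top hfm.ennreal_ofReal.aemeasurable (by positivity)
    ((div_lt_one (by positivity)).2 (by linarith)) (hr.trans hrp).le hdim hmom
  exact ENNReal.mul_lt_top (Jrd_lt_top hr)
    (ENNReal.rpow_lt_top_of_nonneg (by positivity) hdensity.ne)

end Zador

theorem stmt_1_general {d : ℕ} (hd : 1 ≤ d) (r s : ℝ) (hr : 0 < r) (hs : 0 < s) (hsr : s < r)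
    (f : EuclideanSpace ℝ (Fin d) → ℝ) (hfm : Measurable f)
    (P : Measure (EuclideanSpace ℝ (Fin d))) [IsProbabilityMeasure P]
    (hP : P = volume.withDensity fun x => ENNReal.ofReal (f x))
    (θ : ℝ) (hθ : 0 < θ) (μ : EuclideanSpace ℝ (Fin d)) (hadm : Admissible f θ μ)
    (η : ℝ) (hη : 0 < η)
    (hmom : (∫⁻ x, ENNReal.ofReal ‖x‖ ^ (r + η) ∂P) ≠ ⊤)
    (α : ℕ → Finset (EuclideanSpace ℝ (Fin d))) (hα : AsympOptimalSeq P f r α)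
    (hint : (∫⁻ x in {x | 0 < f x},
        ENNReal.ofReal (fdil f θ μ x) ^ (r / (r - s)) *
          ENNReal.ofReal (f x) ^ (-(s / (r - s)))) < ⊤) :
    RateOptimal P s (fun n => dilate (α n) θ μ) ∧
    limsup (fun n : ℕ => (n : ℝ≥0∞) ^ (s / (d : ℝ)) * qerr P s (dilate (α n) θ μ)) atTop ≤
      ENNReal.ofReal θ ^ (s + d : ℝ) * Qr f r ^ (s / r) *
        (∫⁻ x in {x | 0 < f x},
          ENNReal.ofReal (fdil f θ μ x) ^ (r / (r - s)) *
            ENNReal.ofReal (f x) ^ (-(s / (r - s)))) ^ (1 - s / r) := by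
  subst hP
  set I := ∫⁻ x in {x | 0 < f x},
    ENNReal.ofReal (fdil f θ μ x) ^ (r / (r - s)) * ENNReal.ofReal (f x) ^ (-(s / (r - s)))
  have hQ : Qr f r < ⊤ :=
    Qr_lt_top hd hfm hr (lt_add_of_pos_right r hη) (by simpa only [ofReal_norm] using hmom)
  have hsr' : 0 ≤ 1 - s / r := by rw [sub_nonneg, div_le_one hr]; exact hsr.le
  have hθ' : ENNReal.ofReal θ ^ (s + d : ℝ) ≠ ⊤ := by finiteness
  have hI : I ^ (1 - s / r) ≠ ⊤ := ENNReal.rpow_ne_top_of_nonneg hsr' hint.ne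
  have hbound : ∀ n : ℕ, (n : ℝ≥0∞) ^ (s / d) * qerr _ s (dilate (α n) θ μ) ≤
      ENNReal.ofReal θ ^ (s + d : ℝ) * ((n : ℝ≥0∞) ^ (r / d) * qerr _ r (α n)) ^ (s / r) *
        I ^ (1 - s / r) := fun n =>
    calc _ ≤ (n : ℝ≥0∞) ^ (s / d) *
          (ENNReal.ofReal θ ^ (s + d : ℝ) * qerr _ r (α n) ^ (s / r) * I ^ (1 - s / r)) :=
          mul_le_mul_right (qerr_dilate_le hs.le hsr hfm hθ hadm (α n)) _
      _ = _ := by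
          rw [ENNReal.mul_rpow_of_nonneg _ _ (by positivity), ← ENNReal.rpow_mul,
            show r / d * (s / r) = s / d by field_simp]
          ring
  have hlim : Tendsto (fun n : ℕ => ENNReal.ofReal θ ^ (s + d : ℝ) *
      ((n : ℝ≥0∞) ^ (r / d) * qerr _ r (α n)) ^ (s / r) * I ^ (1 - s / r)) atTop
      (𝓝 (ENNReal.ofReal θ ^ (s + d : ℝ) * Qr f r ^ (s / r) * I ^ (1 - s / r))) :=
    ENNReal.Tendsto.mul_const (ENNReal.Tendsto.const_mul
      ((ENNReal.continuous_rpow_const.tendsto _).comp hα.2) (Or.inr hθ')) (Or.inr hI)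
  have hlimsup := (limsup_le_limsup (Eventually.of_forall hbound)).trans hlim.limsup_eq.le
  refine ⟨hlimsup.trans_lt ?_, hlimsup⟩
  exact ENNReal.mul_lt_top (ENNReal.mul_lt_top hθ'.lt_top
    (ENNReal.rpow_lt_top_of_nonneg (by positivity) hQ.ne)) hI.lt_top

/-- **Theorem 3.1, upper estimate, `s < r`.**
If `P = f·λ_d`, `(θ,μ)` is `P`-admissible, `E|X|^{r+η} < ∞`, `(α_n)` is
asymptotically `L^r(P)`-optimal and `∫_{f>0} f_{θ,μ}^{r/(r-s)} f^{-s/(r-s)} dλ_d < ∞`,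
then `(α_n^{θ,μ})` is `L^s(P)`-rate-optimal and
`limsup_n n^{s/d} ∫ d(x,α_n^{θ,μ})^s dP ≤ θ^{s+d} Q_r(P)^{s/r}
  (∫_{f>0} f_{θ,μ}^{r/(r-s)} f^{-s/(r-s)} dλ_d)^{1-s/r}`. -/
theorem stmt_1 {d : ℕ} (hd : 1 ≤ d) (r s : ℝ) (hr : 0 < r) (hs : 0 < s) (hsr : s < r)
    (f : EuclideanSpace ℝ (Fin d) → ℝ) (hf0 : ∀ x, 0 ≤ f x) (hfm : Measurable f)
    (P : Measure (EuclideanSpace ℝ (Fin d))) [IsProbabilityMeasure P]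
    (hP : P = volume.withDensity fun x => ENNReal.ofReal (f x))
    (θ : ℝ) (hθ : 0 < θ) (μ : EuclideanSpace ℝ (Fin d)) (hadm : Admissible f θ μ)
    (η : ℝ) (hη : 0 < η)
    (hmom : (∫⁻ x, ENNReal.ofReal ‖x‖ ^ (r + η) ∂P) ≠ ⊤)
    (α : ℕ → Finset (EuclideanSpace ℝ (Fin d))) (hα : AsympOptimalSeq P f r α)
    (hint : (∫⁻ x in {x | 0 < f x},
        ENNReal.ofReal (fdil f θ μ x) ^ (r / (r - s)) *
          ENNReal.ofReal (f x) ^ (-(s / (r - s)))) < ⊤) :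
    RateOptimal P s (fun n => dilate (α n) θ μ) ∧
    limsup (fun n : ℕ => (n : ℝ≥0∞) ^ (s / (d : ℝ)) * qerr P s (dilate (α n) θ μ)) atTop ≤
      ENNReal.ofReal θ ^ (s + d : ℝ) * Qr f r ^ (s / r) *
        (∫⁻ x in {x | 0 < f x},
          ENNReal.ofReal (fdil f θ μ x) ^ (r / (r - s)) *
            ENNReal.ofReal (f x) ^ (-(s / (r - s)))) ^ (1 - s / r) :=
  stmt_1_general hd r s hr hs hsr f hfm P hP θ hθ μ hadm η hη hmom α hα hint
end
end

section
/- Let r > 0 and s ∈ (0, r+d), and let X be an ℝ^d-valued random variable with distribution P = f·λ_d such that E|X|^{r+η} < ∞ for some η > 0. Let (α_n)_{n≥1} be an L^r(P)-optimal sequence of quantizers, and let θ > 0, μ ∈ ℝ^d be such that (θ,μ) is P-admissible and hypotheses (H1) and (H2) hold. Then there exists b ∈ (0,1/2) such that ∫_{ℝ^d} ψ_b^{s/(d+r)} dP_{θ,μ} < ∞. -/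
open MeasureTheory ENNReal Filter Set Metric Topology
open scoped Classical

noncomputable section

/-
Split the integral at a large radius. Comparing `α_n` with the one-point codebook `{0}`, whose
error is finite by the moment condition, on a ball of positive mass shows that optimal codebooks
stay near the origin: `d(x, α_n) ≤ |x| + R` for all `n`. Far out, this puts every ball in the
definition of `ψ_b(x)` below radius `2b|x|`, so the integrand is dominated by the one in (H2).
On a bounded set, Besicovitch's covering theorem gives the weak-type estimate
`u · P(ψ_b > u) ≤ C`; admissibility and (H1) bound `P_{θ,μ}` by a multiple of `P` there, and a
weak-`L¹` function is in `L^p` of a finite measure for every `p < 1`, here `p = s/(d+r)`.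
-/

open Besicovitch in
theorem Besicovitch.measure_mul_le_of_forall_ball_le (α : Type*) [MetricSpace α]
    [SecondCountableTopology α] [HasBesicovitchCovering α] [MeasurableSpace α]
    [OpensMeasurableSpace α] :
    ∃ N : ℕ, ∀ (P ν : Measure α) (s : Set α) (ρ : α → ℝ) (T : ℝ) (u : ℝ≥0∞),
      (∀ x ∈ s, 0 < ρ x ∧ ρ x ≤ T ∧ P (ball x (ρ x)) * u ≤ ν (ball x (ρ x))) →
      P s * u ≤ N * ν (⋃ x ∈ s, ball x (ρ x)) := by
  obtain ⟨N, τ, hτ, hN⟩ := HasBesicovitchCovering.no_satelliteConfig (α := α)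
  refine ⟨N, fun P ν s ρ T u hs => ?_⟩
  let q : BallPackage s α :=
    { c := (↑), r := fun x => ρ x, rpos := fun x => (hs x x.2).1, r_bound := T,
      r_le := fun x => (hs x x.2).2.1 }
  obtain ⟨t, htdisj, htcov⟩ := exist_disjoint_covering_families hτ hN q
  set U := ⋃ x ∈ s, ball x (ρ x)
  have hfamily : ∀ i, P (⋃ j ∈ t i, ball (j : α) (ρ j)) * u ≤ ν U := by
    intro i
    have hdisj : (t i).PairwiseDisjoint fun j : s => ball (j : α) (ρ j) :=
      (htdisj i).mono fun j => ball_subset_closedBall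
    have hcount : (t i).Countable :=
      hdisj.countable_of_isOpen (fun _ _ => isOpen_ball)
        fun j _ => nonempty_ball.2 (hs j j.2).1
    calc P (⋃ j ∈ t i, ball (j : α) (ρ j)) * u
        ≤ (∑' j : t i, P (ball (j : α) (ρ j))) * u := by
          gcongr; exact measure_biUnion_le P hcount _
      _ = ∑' j : t i, P (ball (j : α) (ρ j)) * u := ENNReal.tsum_mul_right.symm
      _ ≤ ∑' j : t i, ν (ball (j : α) (ρ j)) :=
          ENNReal.tsum_le_tsum fun j => (hs j j.1.2).2.2
      _ = ν (⋃ j ∈ t i, ball (j : α) (ρ j)) :=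
          (measure_biUnion hcount hdisj fun _ _ => measurableSet_ball).symm
      _ ≤ ν U := measure_mono <| iUnion₂_subset fun j _ =>
          subset_biUnion_of_mem (u := fun x => ball x (ρ x)) j.2
  have hcover : s ⊆ ⋃ i, ⋃ j ∈ t i, ball (j : α) (ρ j) := fun x hx =>
    htcov ⟨⟨x, hx⟩, rfl⟩
  calc P s * u ≤ (∑ i, P (⋃ j ∈ t i, ball (j : α) (ρ j))) * u := by
        gcongr; exact (measure_mono hcover).trans (measure_iUnion_fintype_le P _)
    _ = ∑ i, P (⋃ j ∈ t i, ball (j : α) (ρ j)) * u := Finset.sum_mul _ _ _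
    _ ≤ ∑ _i : Fin N, ν U := Finset.sum_le_sum fun i _ => hfamily i
    _ = N * ν U := by simp

theorem ENNReal.exists_two_pow_lt_le {a : ℝ≥0∞} (h1 : 1 < a) (htop : a ≠ ⊤) :
    ∃ k : ℕ, 2 ^ k < a ∧ a ≤ 2 ^ (k + 1) := by
  have hex : ∃ n : ℕ, a ≤ 2 ^ n := by
    obtain ⟨n, hn⟩ := ENNReal.exists_nat_gt htop
    exact ⟨n, hn.le.trans (by exact_mod_cast Nat.lt_two_pow_self.le)⟩
  have hpos : Nat.find hex ≠ 0 := fun h => by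
    have := Nat.find_spec hex
    rw [h, pow_zero] at this
    exact this.not_gt h1
  refine ⟨Nat.find hex - 1, not_le.1 (Nat.find_min hex (by omega)), ?_⟩
  rw [Nat.sub_add_cancel (Nat.pos_of_ne_zero hpos)]
  exact Nat.find_spec hex

theorem ENNReal.rpow_le_one_add_tsum_indicator (a : ℝ≥0∞) {p : ℝ} (hp : 0 < p) :
    a ^ p ≤ 1 + ∑' k : ℕ, (Ioi ((2 : ℝ≥0∞) ^ k)).indicator (fun _ => (2 ^ p) ^ (k + 1)) a := by
  rcases le_or_gt a 1 with ha1 | ha1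
  · exact (ENNReal.rpow_le_one ha1 hp.le).trans le_self_add
  rcases eq_or_ne a ⊤ with rfl | htop
  · have hsum : ∑' k : ℕ,
        (Ioi ((2 : ℝ≥0∞) ^ k)).indicator (fun _ => ((2 : ℝ≥0∞) ^ p) ^ (k + 1)) ⊤ = ⊤ := by
      refine top_le_iff.1 ((ENNReal.tsum_const_eq_top_of_ne_zero one_ne_zero).symm.trans_le
        (ENNReal.tsum_le_tsum fun k => ?_))
      rw [indicator_of_mem (mem_Ioi.2 (ENNReal.pow_lt_top (by norm_num)))]
      exact one_le_pow₀ (ENNReal.one_le_rpow (by norm_num) hp)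
    rw [hsum, add_top]
    exact le_top
  obtain ⟨k, hlt, hle⟩ := ENNReal.exists_two_pow_lt_le ha1 htop
  calc a ^ p ≤ ((2 : ℝ≥0∞) ^ (k + 1)) ^ p := ENNReal.rpow_le_rpow hle hp.le
    _ = (2 ^ p) ^ (k + 1) := by rw [← ENNReal.rpow_natCast, ← ENNReal.rpow_natCast,
          ← ENNReal.rpow_mul, ← ENNReal.rpow_mul, mul_comm]
    _ = (Ioi ((2 : ℝ≥0∞) ^ k)).indicator (fun _ => (2 ^ p) ^ (k + 1)) a :=
          (indicator_of_mem (mem_Ioi.2 hlt) (fun _ => _)).symm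
    _ ≤ _ := (ENNReal.le_tsum k).trans le_add_self

theorem MeasureTheory.lintegral_rpow_lt_top_of_weakType {X : Type*} [MeasurableSpace X]
    {ν : Measure X} [IsFiniteMeasure ν] {g : X → ℝ≥0∞} (hg : Measurable g) {p : ℝ}
    (hp0 : 0 < p) (hp1 : p < 1) {C : ℝ≥0∞} (hC : C ≠ ⊤)
    (hweak : ∀ u, ν {x | u < g x} * u ≤ C) :
    ∫⁻ x, g x ^ p ∂ν < ⊤ := by
  set t : ℝ≥0∞ := 2 ^ p
  have ht : t / 2 < 1 := by
    rw [ENNReal.div_lt_iff (by norm_num) (by norm_num), one_mul]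
    simpa using ENNReal.rpow_lt_rpow_of_exponent_lt (x := 2) (by norm_num) (by norm_num) hp1
  have hterm : ∀ k : ℕ, t ^ (k + 1) * ν {x | 2 ^ k < g x} ≤ t * C * (t / 2) ^ k := by
    intro k
    have hpow : t ^ k = (t / 2) ^ k * 2 ^ k := by
      rw [← mul_pow, ENNReal.div_mul_cancel two_ne_zero ofNat_ne_top]
    calc t ^ (k + 1) * ν {x | 2 ^ k < g x}
        = t * (t / 2) ^ k * (ν {x | 2 ^ k < g x} * 2 ^ k) := by
          rw [pow_succ', hpow]
          ring
      _ ≤ t * (t / 2) ^ k * C := by gcongr; exact hweak _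
      _ = t * C * (t / 2) ^ k := by ring
  have hlayer : ∀ k : ℕ, ∫⁻ x, (Ioi ((2 : ℝ≥0∞) ^ k)).indicator (fun _ => t ^ (k + 1)) (g x) ∂ν
      = t ^ (k + 1) * ν {x | 2 ^ k < g x} := fun k => by
    rw [← lintegral_indicator_const (measurableSet_lt measurable_const hg)]
    rfl
  calc ∫⁻ x, g x ^ p ∂ν
      ≤ ∫⁻ x, 1 + ∑' k : ℕ, (Ioi ((2 : ℝ≥0∞) ^ k)).indicator (fun _ => t ^ (k + 1)) (g x) ∂ν :=
        lintegral_mono fun x => ENNReal.rpow_le_one_add_tsum_indicator _ hp0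
    _ = ν univ + ∑' k : ℕ, t ^ (k + 1) * ν {x | 2 ^ k < g x} := by
        rw [lintegral_add_left measurable_const, lintegral_one, lintegral_tsum (f := fun k x =>
          (Ioi ((2 : ℝ≥0∞) ^ k)).indicator (fun _ => t ^ (k + 1)) (g x)) fun k =>
          ((measurable_const.indicator measurableSet_Ioi).comp hg).aemeasurable]
        simp only [hlayer]
    _ ≤ ν univ + ∑' k : ℕ, t * C * (t / 2) ^ k := add_le_add le_rfl (ENNReal.tsum_le_tsum hterm)
    _ < ⊤ := by
        rw [ENNReal.tsum_mul_left]
        exact ENNReal.add_lt_top.2 ⟨measure_lt_top _ _, ENNReal.mul_lt_top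
          (ENNReal.mul_lt_top (ENNReal.rpow_lt_top_of_nonneg hp0.le ofNat_ne_top) hC.lt_top)
          (tsum_geometric_lt_top.2 ht)⟩

section Homothety

variable {E : Type*} [NormedAddCommGroup E] [NormedSpace ℝ E] [FiniteDimensional ℝ E]
  [MeasurableSpace E] [BorelSpace E] (ν : Measure E) [ν.IsAddHaarMeasure]

theorem map_homothety_addHaar (c : E) {θ : ℝ} (hθ : θ ≠ 0) :
    Measure.map (fun x => c + θ • (x - c)) ν
      = ENNReal.ofReal |θ ^ Module.finrank ℝ E|⁻¹ • ν := by
  have hcomp : (fun x => c + θ • (x - c)) = (c + ·) ∘ (θ • ·) ∘ (· - c) := rfl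
  rw [hcomp, ← Measure.map_map (by fun_prop) (by fun_prop),
    ← Measure.map_map (by fun_prop) (by fun_prop), map_sub_right_eq_self,
    Measure.map_addHaar_smul ν hθ, Measure.map_smul, map_add_left_eq_self, abs_inv]

theorem ae_comp_homothety (c : E) {θ : ℝ} (hθ : θ ≠ 0) {p : E → Prop} (h : ∀ᵐ x ∂ν, p x) :
    ∀ᵐ x ∂ν, p (c + θ • (x - c)) :=
  (show Measure.QuasiMeasurePreserving (fun x => c + θ • (x - c)) ν ν from ⟨by fun_prop, by
    rw [map_homothety_addHaar ν c hθ]; exact Measure.smul_absolutelyContinuous⟩).ae h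

end Homothety

theorem homothety_inv_homothety {K V : Type*} [Field K] [AddCommGroup V] [Module K V] (c x : V)
    {θ : K} (hθ : θ ≠ 0) : c + θ⁻¹ • (c + θ • (x - c) - c) = x := by
  simp [smul_smul, hθ]

theorem Pdil_withDensity_apply {d : ℕ} {g : EuclideanSpace ℝ (Fin d) → ℝ≥0∞} (hg : Measurable g)
    {θ : ℝ} (hθ : θ ≠ 0) (μ : EuclideanSpace ℝ (Fin d)) {A : Set (EuclideanSpace ℝ (Fin d))}
    (hA : MeasurableSet A) :
    Pdil (volume.withDensity g) θ μ A
      = ENNReal.ofReal |θ ^ d| * ∫⁻ y in A, g (μ + θ • (y - μ)) := by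
  have hT : Measurable fun x : EuclideanSpace ℝ (Fin d) => μ + θ⁻¹ • (x - μ) := by fun_prop
  have hmap :=
    map_homothety_addHaar (volume : Measure (EuclideanSpace ℝ (Fin d))) μ (inv_ne_zero hθ)
  rw [finrank_euclideanSpace_fin, inv_pow, abs_inv, inv_inv] at hmap
  rw [Pdil, Measure.map_apply hT hA, withDensity_apply _ (hT hA), ← smul_eq_mul,
    ← lintegral_smul_measure, ← Measure.restrict_smul, ← hmap,
    setLIntegral_map (f := fun y => g (μ + θ • (y - μ))) hA (hg.comp (by fun_prop)) hT]
  have hST (x : EuclideanSpace ℝ (Fin d)) : μ + θ • (μ + θ⁻¹ • (x - μ) - μ) = x := by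
    simpa using homothety_inv_homothety μ x (inv_ne_zero hθ)
  simp only [hST]

theorem Pdil_le_mul_of_subset_ball {d : ℕ} {f : EuclideanSpace ℝ (Fin d) → ℝ} (hfm : Measurable f)
    {P : Measure (EuclideanSpace ℝ (Fin d))}
    (hP : P = volume.withDensity fun x => ENNReal.ofReal (f x))
    {θ : ℝ} (hθ : θ ≠ 0) {μ : EuclideanSpace ℝ (Fin d)} (hadm : Admissible f θ μ)
    (h1 : H1 f θ μ) {M : ℝ} (hM : 0 < M) :
    ∃ C ≠ ⊤, ∀ A, MeasurableSet A → A ⊆ ball 0 M → Pdil P θ μ A ≤ C * P A := by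
  obtain ⟨C, hC⟩ := h1 M hM
  have hsupp : ∀ᵐ y, 0 < f (μ + θ • (y - μ)) → 0 < f y := by
    filter_upwards [ae_comp_homothety volume μ hθ hadm] with y hy
    rwa [homothety_inv_homothety μ y hθ] at hy
  have hdens : ∀ᵐ y, y ∈ ball (0 : EuclideanSpace ℝ (Fin d)) M →
      ENNReal.ofReal (f (μ + θ • (y - μ))) ≤ ENNReal.ofReal (max C 0) * ENNReal.ofReal (f y) := by
    filter_upwards [hsupp] with y hy hyM
    rcases lt_or_ge 0 (f y) with hf | hf
    · rw [← ENNReal.ofReal_mul (le_max_right _ _)]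
      refine ENNReal.ofReal_le_ofReal ((div_le_iff₀ hf).1 (hC y hyM hf) |>.trans ?_)
      exact mul_le_mul_of_nonneg_right (le_max_left _ _) hf.le
    · rw [ENNReal.ofReal_of_nonpos (not_lt.1 fun h => hf.not_gt (hy h))]
      exact zero_le
  refine ⟨ENNReal.ofReal |θ ^ d| * ENNReal.ofReal (max C 0), by finiteness, fun A hA hAM => ?_⟩
  rw [hP, Pdil_withDensity_apply hfm.ennreal_ofReal hθ μ hA, withDensity_apply _ hA, mul_assoc,
    ← lintegral_const_mul' (ENNReal.ofReal (max C 0)) _ ofReal_ne_top]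
  exact mul_le_mul_right
    (lintegral_mono_ae ((ae_restrict_iff' hA).2 (hdens.mono fun y hy hyA => hy (hAM hyA)))) _

theorem measurable_measure_ball {X : Type*} [PseudoMetricSpace X] [SecondCountableTopology X]
    [MeasurableSpace X] [OpensMeasurableSpace X] (ν : Measure X) [SFinite ν] {ρ : X → ℝ}
    (hρ : Continuous ρ) : Measurable fun x => ν (ball x (ρ x)) :=
  measurable_measure_prodMk_left
    (isOpen_lt (continuous_snd.dist continuous_fst) (hρ.comp continuous_fst)).measurableSet

theorem measurable_maxFun {d : ℕ} (P : Measure (EuclideanSpace ℝ (Fin d))) [SFinite P]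
    (α : ℕ → Finset (EuclideanSpace ℝ (Fin d))) (b : ℝ) : Measurable (maxFun P α b) := by
  refine Measurable.iSup fun n => Measurable.iSup fun _ => ?_
  have hρ : Continuous fun x => b * qdist x (α n) := continuous_const.mul (continuous_infDist_pt _)
  exact (measurable_measure_ball volume hρ).div (measurable_measure_ball P hρ)

theorem maxFun_weakType {d : ℕ} (P : Measure (EuclideanSpace ℝ (Fin d)))
    (α : ℕ → Finset (EuclideanSpace ℝ (Fin d))) {b R : ℝ} (hb : 0 ≤ b)
    (hR : ∀ n, 1 ≤ n → ∀ x, qdist x (α n) ≤ ‖x‖ + R) (M : ℝ) :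
    ∃ C ≠ ⊤, ∀ u, P ({x | u < maxFun P α b x} ∩ closedBall 0 M) * u ≤ C := by
  obtain ⟨N, hN⟩ := Besicovitch.measure_mul_le_of_forall_ball_le (EuclideanSpace ℝ (Fin d))
  refine ⟨N * volume (closedBall (0 : EuclideanSpace ℝ (Fin d)) (M + b * (M + R))),
    ENNReal.mul_ne_top (natCast_ne_top N) measure_closedBall_lt_top.ne, fun u => ?_⟩
  set S := {x | u < maxFun P α b x} ∩ closedBall 0 M
  have hsel : ∀ x ∈ S, ∃ n, 1 ≤ n ∧ u < volume (ball x (b * qdist x (α n)))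
      / P (ball x (b * qdist x (α n))) := fun x hx => by
    have hu : u < maxFun P α b x := hx.1
    obtain ⟨n, hn⟩ := lt_iSup_iff.1 hu
    obtain ⟨hn1, hu⟩ := lt_iSup_iff.1 hn
    exact ⟨n, hn1, hu⟩
  choose! n hn1 hnu using hsel
  have hρT : ∀ x ∈ S, b * qdist x (α (n x)) ≤ b * (M + R) := fun x hx =>
    mul_le_mul_of_nonneg_left ((hR _ (hn1 x hx) x).trans
      (by linarith [mem_closedBall_zero_iff.1 hx.2])) hb
  refine (hN P volume S (fun x => b * qdist x (α (n x))) (b * (M + R)) u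
    fun x hx => ⟨?_, hρT x hx, ENNReal.mul_le_of_le_div' (hnu x hx).le⟩).trans ?_
  · by_contra hρ
    have := hnu x hx
    rw [ball_eq_empty.2 (not_lt.1 hρ)] at this
    simp at this
  · gcongr
    refine iUnion₂_subset fun x hx => ball_subset_closedBall.trans
      (closedBall_subset_closedBall' ?_)
    rw [dist_zero_right]
    linarith [hρT x hx, mem_closedBall_zero_iff.1 hx.2]

theorem maxFun_le_iSup_ball {d : ℕ} (P : Measure (EuclideanSpace ℝ (Fin d)))
    (α : ℕ → Finset (EuclideanSpace ℝ (Fin d))) {b R : ℝ} (hb : 0 ≤ b)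
    {x : EuclideanSpace ℝ (Fin d)} (hR : ∀ n, 1 ≤ n → qdist x (α n) ≤ ‖x‖ + R) (hx : R ≤ ‖x‖) :
    maxFun P α b x ≤ ⨆ t ∈ Ioc (0 : ℝ) (2 * b * ‖x‖), volume (ball x t) / P (ball x t) := by
  refine iSup₂_le fun n hn => ?_
  rcases le_or_gt (b * qdist x (α n)) 0 with hρ | hρ
  · simp [ball_eq_empty.2 hρ]
  · refine le_iSup₂_of_le (f := fun t _ => volume (ball x t) / P (ball x t))
      (b * qdist x (α n)) ⟨hρ, ?_⟩ le_rfl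
    nlinarith [hR n hn]

theorem OptimalSeq.qerr_le {d : ℕ} {P : Measure (EuclideanSpace ℝ (Fin d))} {r : ℝ} (hr : 0 < r)
    {α : ℕ → Finset (EuclideanSpace ℝ (Fin d))} (hα : OptimalSeq P r α) {n : ℕ} (hn : 1 ≤ n)
    {β : Finset (EuclideanSpace ℝ (Fin d))} (hβ : β.Nonempty) (hcard : β.card ≤ n) :
    qerr P r (α n) ≤ qerr P r β := by
  rw [(hα n hn).2.2, ← ENNReal.le_rpow_inv_iff hr, ← one_div]
  exact iInf_le_of_le β (iInf_le_of_le hβ (iInf_le _ hcard))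

theorem qerr_zero_ne_top {d : ℕ} {P : Measure (EuclideanSpace ℝ (Fin d))} [IsFiniteMeasure P]
    {r η : ℝ} (hr : 0 ≤ r) (hη : 0 < η) (hmom : ∫⁻ x, ENNReal.ofReal ‖x‖ ^ (r + η) ∂P ≠ ⊤) :
    qerr P r {0} ≠ ⊤ := by
  have hle (x : EuclideanSpace ℝ (Fin d)) :
      ENNReal.ofReal (qdist x {0}) ^ r ≤ 1 + ENNReal.ofReal ‖x‖ ^ (r + η) := by
    rw [qdist, Finset.coe_singleton, infDist_singleton, dist_zero_right]
    rcases le_or_gt (ENNReal.ofReal ‖x‖) 1 with h | h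
    · exact (ENNReal.rpow_le_one h hr).trans le_self_add
    · exact (ENNReal.rpow_le_rpow_of_exponent_le h.le (by linarith)).trans le_add_self
  refine ne_top_of_le_ne_top ?_ (lintegral_mono hle)
  rw [lintegral_add_left measurable_const, lintegral_one]
  exact ENNReal.add_ne_top.2 ⟨measure_ne_top P univ, hmom⟩

theorem ofReal_qdist_sub_rpow_mul_le_qerr {d : ℕ} (P : Measure (EuclideanSpace ℝ (Fin d))) {r : ℝ}
    (hr : 0 ≤ r) (α : Finset (EuclideanSpace ℝ (Fin d))) (c : EuclideanSpace ℝ (Fin d)) (ρ : ℝ) :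
    ENNReal.ofReal (qdist c α - ρ) ^ r * P (ball c ρ) ≤ qerr P r α := by
  have hpt : ∀ x ∈ ball c ρ, ENNReal.ofReal (qdist c α - ρ) ^ r ≤ ENNReal.ofReal (qdist x α) ^ r :=
    fun x hx => by
    refine ENNReal.rpow_le_rpow (ENNReal.ofReal_le_ofReal ?_) hr
    have htri : qdist c α ≤ qdist x α + dist c x := infDist_le_infDist_add_dist
    linarith [mem_ball'.1 hx]
  calc ENNReal.ofReal (qdist c α - ρ) ^ r * P (ball c ρ)
      = ∫⁻ _ in ball c ρ, ENNReal.ofReal (qdist c α - ρ) ^ r ∂P := (setLIntegral_const _ _).symm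
    _ ≤ ∫⁻ x in ball c ρ, ENNReal.ofReal (qdist x α) ^ r ∂P :=
        setLIntegral_mono' measurableSet_ball hpt
    _ ≤ qerr P r α := setLIntegral_le_lintegral _ _

theorem OptimalSeq.exists_qdist_le_norm_add {d : ℕ} {P : Measure (EuclideanSpace ℝ (Fin d))}
    [NeZero P] {r : ℝ} (hr : 0 < r) {α : ℕ → Finset (EuclideanSpace ℝ (Fin d))}
    (hα : OptimalSeq P r α) (h0 : qerr P r {0} ≠ ⊤) :
    ∃ R, ∀ n, 1 ≤ n → ∀ x, qdist x (α n) ≤ ‖x‖ + R := by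
  obtain ⟨ρ, hρ⟩ : ∃ ρ : ℕ, P (ball (0 : EuclideanSpace ℝ (Fin d)) ρ) ≠ 0 := by
    by_contra! h
    refine NeZero.ne P (Measure.measure_univ_eq_zero.1 ?_)
    rw [← iUnion_ball_nat 0]
    exact measure_iUnion_null h
  set K := qerr P r {0} / P (ball 0 ρ)
  have hK : K ≠ ⊤ := ENNReal.div_ne_top h0 hρ
  refine ⟨ρ + (K ^ r⁻¹).toReal, fun n hn x => ?_⟩
  have hmass : ENNReal.ofReal (qdist 0 (α n) - ρ) ≤ K ^ r⁻¹ := by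
    rw [ENNReal.le_rpow_inv_iff hr, ENNReal.le_div_iff_mul_le (Or.inl hρ) (Or.inr h0)]
    exact (ofReal_qdist_sub_rpow_mul_le_qerr P hr.le _ 0 ρ).trans
      (hα.qerr_le hr hn (Finset.singleton_nonempty 0) (by simpa using hn))
  have hdist0 :=
    (ENNReal.ofReal_le_iff_le_toReal (ENNReal.rpow_ne_top_of_nonneg (by positivity) hK)).1 hmass
  have htri : qdist x (α n) ≤ qdist 0 (α n) + dist x 0 := infDist_le_infDist_add_dist
  rw [dist_zero_right] at htri
  linarith

theorem setLIntegral_closedBall_maxFun_rpow_lt_top {d : ℕ}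
    {P ν : Measure (EuclideanSpace ℝ (Fin d))} [SFinite P] [IsFiniteMeasure ν]
    (α : ℕ → Finset (EuclideanSpace ℝ (Fin d))) {b R : ℝ} (hb : 0 ≤ b)
    (hR : ∀ n, 1 ≤ n → ∀ x, qdist x (α n) ≤ ‖x‖ + R) {M : ℝ} {C : ℝ≥0∞} (hC : C ≠ ⊤)
    (hν : ∀ A, MeasurableSet A → A ⊆ closedBall 0 M → ν A ≤ C * P A) {p : ℝ} (hp0 : 0 < p)
    (hp1 : p < 1) :
    ∫⁻ x in closedBall 0 M, maxFun P α b x ^ p ∂ν < ⊤ := by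
  have hψ := measurable_maxFun P α b
  obtain ⟨C', hC', hweak⟩ := maxFun_weakType P α hb hR M
  refine lintegral_rpow_lt_top_of_weakType hψ hp0 hp1 (ENNReal.mul_ne_top hC hC') fun u => ?_
  have hL : MeasurableSet {x | u < maxFun P α b x} := measurableSet_lt measurable_const hψ
  rw [Measure.restrict_apply hL]
  calc ν ({x | u < maxFun P α b x} ∩ closedBall 0 M) * u
      ≤ C * P ({x | u < maxFun P α b x} ∩ closedBall 0 M) * u :=
        mul_le_mul_left (hν _ (hL.inter measurableSet_closedBall) inter_subset_right) u
    _ ≤ C * C' := by rw [mul_assoc]; exact mul_le_mul_right (hweak u) _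

theorem setLIntegral_compl_closedBall_maxFun_rpow_le {d : ℕ}
    (P ν : Measure (EuclideanSpace ℝ (Fin d))) (α : ℕ → Finset (EuclideanSpace ℝ (Fin d)))
    {b R : ℝ} (hb : 0 ≤ b) (hR : ∀ n, 1 ≤ n → ∀ x, qdist x (α n) ≤ ‖x‖ + R) (M : ℝ) {p : ℝ}
    (hp : 0 ≤ p) :
    ∫⁻ x in (closedBall 0 (max M R))ᶜ, maxFun P α b x ^ p ∂ν
      ≤ ∫⁻ x in {x | M < ‖x‖},
          (⨆ t ∈ Ioc (0 : ℝ) (2 * b * ‖x‖), volume (ball x t) / P (ball x t)) ^ p ∂ν := by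
  refine (setLIntegral_mono' measurableSet_closedBall.compl fun x hx => ?_).trans
    (lintegral_mono_set fun x hx => ?_)
  · have hx' : max M R < ‖x‖ := by simpa using hx
    exact ENNReal.rpow_le_rpow (maxFun_le_iSup_ball P α hb (fun n hn => hR n hn x)
      ((le_max_right M R).trans hx'.le)) hp
  · have hx' : max M R < ‖x‖ := by simpa using hx
    exact (le_max_left M R).trans_lt hx'

theorem stmt_5_general {d : ℕ} (r s : ℝ) (hr : 0 < r) (hs : 0 < s)
    (hs' : s < r + d)
    (f : EuclideanSpace ℝ (Fin d) → ℝ) (hfm : Measurable f)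
    (P : Measure (EuclideanSpace ℝ (Fin d))) [IsProbabilityMeasure P]
    (hP : P = volume.withDensity fun x => ENNReal.ofReal (f x))
    (η : ℝ) (hη : 0 < η)
    (hmom : (∫⁻ x, ENNReal.ofReal ‖x‖ ^ (r + η) ∂P) ≠ ⊤)
    (α : ℕ → Finset (EuclideanSpace ℝ (Fin d))) (hα : OptimalSeq P r α)
    (θ : ℝ) (hθ : 0 < θ) (μ : EuclideanSpace ℝ (Fin d))
    (hadm : Admissible f θ μ) (h1 : H1 f θ μ) (h2 : H2 P θ μ s r) :
    ∃ b ∈ Ioo (0 : ℝ) (1 / 2),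
      (∫⁻ x, maxFun P α b x ^ (s / ((d : ℝ) + r)) ∂(Pdil P θ μ)) < ⊤ := by
  obtain ⟨b, hb, M, hM, hH2⟩ := h2
  refine ⟨b, hb, ?_⟩
  obtain ⟨R, hR⟩ := hα.exists_qdist_le_norm_add hr (qerr_zero_ne_top hr.le hη hmom)
  have hp0 : 0 < s / ((d : ℝ) + r) := by positivity
  have hp1 : s / ((d : ℝ) + r) < 1 := (div_lt_one (by positivity)).2 (by linarith)
  obtain ⟨C, hC, hPdil⟩ :=
    Pdil_le_mul_of_subset_ball hfm hP hθ.ne' hadm h1 (M := max M R + 1) (by positivity)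
  have : IsFiniteMeasure (Pdil P θ μ) := by unfold Pdil; infer_instance
  rw [← lintegral_add_compl _ (measurableSet_closedBall (x := 0) (ε := max M R))]
  exact ENNReal.add_lt_top.2
    ⟨setLIntegral_closedBall_maxFun_rpow_lt_top α hb.1.le hR hC
      (fun A hA hAM => hPdil A hA (hAM.trans (closedBall_subset_ball (lt_add_one _)))) hp0 hp1,
     (setLIntegral_compl_closedBall_maxFun_rpow_le P _ α hb.1.le hR M hp0.le).trans_lt hH2⟩

/-- **Corollary 3.1 (a).**
Let `r > 0`, `s ∈ (0, r+d)`, `P = f·λ_d` with `E|X|^{r+η} < ∞`, let `(α_n)` be an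
`L^r(P)`-optimal sequence of quantizers, and let `(θ,μ)` be `P`-admissible
satisfying (H1) and (H2).  Then there exists `b ∈ (0,1/2)` with
`∫ ψ_b^{s/(d+r)} dP_{θ,μ} < ∞`. -/
theorem stmt_5 {d : ℕ} (hd : 1 ≤ d) (r s : ℝ) (hr : 0 < r) (hs : 0 < s)
    (hs' : s < r + d)
    (f : EuclideanSpace ℝ (Fin d) → ℝ) (hf0 : ∀ x, 0 ≤ f x) (hfm : Measurable f)
    (P : Measure (EuclideanSpace ℝ (Fin d))) [IsProbabilityMeasure P]
    (hP : P = volume.withDensity fun x => ENNReal.ofReal (f x))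
    (η : ℝ) (hη : 0 < η)
    (hmom : (∫⁻ x, ENNReal.ofReal ‖x‖ ^ (r + η) ∂P) ≠ ⊤)
    (α : ℕ → Finset (EuclideanSpace ℝ (Fin d))) (hα : OptimalSeq P r α)
    (θ : ℝ) (hθ : 0 < θ) (μ : EuclideanSpace ℝ (Fin d))
    (hadm : Admissible f θ μ) (h1 : H1 f θ μ) (h2 : H2 P θ μ s r) :
    ∃ b ∈ Ioo (0 : ℝ) (1 / 2),
      (∫⁻ x, maxFun P α b x ^ (s / ((d : ℝ) + r)) ∂(Pdil P θ μ)) < ⊤ :=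
  stmt_5_general r s hr hs hs' f hfm P hP η hη hmom α hα θ hθ μ hadm h1 h2
end
end

section
/- Let r, s > 0 and let X be an ℝ^d-valued random variable with distribution P = f·λ_d such that E|X|^{r+η} < ∞ for some η > 0. Suppose there exist N ≥ 0, R ≥ 0 and a decreasing function h : (R,∞) → ℝ_+ such that f(x) = h(|x|) for all x outside the ball B(0,N). Let (θ,μ) be a P-admissible couple of parameters such that ∫_{ℝ^d} f(cx)^{−s/(d+r)} dP_{θ,μ}(x) < ∞ for some c > 1. Then hypothesis (H2) holds, i.e. there exist b ∈ (0,1/2) and M > 0 such that ∫_{{|x|>M}} ( sup_{0<t≤2b|x|} λ_d(B(x,t))/P(B(x,t)) )^{s/(d+r)} dP_{θ,μ}(x) < ∞. -/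
open MeasureTheory ENNReal Filter Set Metric Topology
open scoped Classical

noncomputable section

/-!
Take `b ≤ 1/4` with `1 + 2b ≤ c` and `M ≥ 2 max(R, N)`. For `|x| > M` and `0 < t ≤ 2b|x|`, every
`y ∈ B(x,t)` satisfies `max(R, N) < |y| ≤ c|x|`, where `f = h(|·|)` with `h` decreasing, so
`f ≥ f(cx)` on the ball and `λ_d(B(x,t)) / P(B(x,t)) ≤ f(cx)⁻¹`. Hence the (H2) integrand is at
most `f(cx)^{-s/(d+r)}`, which is `P_{θ,μ}`-integrable by assumption.
-/

lemma mul_measure_le_withDensity_apply {α : Type*} [MeasurableSpace α] (μ : Measure α)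
    {g : α → ℝ≥0∞} {s : Set α} (hs : MeasurableSet s) {a : ℝ≥0∞} (ha : ∀ y ∈ s, a ≤ g y) :
    a * μ s ≤ μ.withDensity g s := by
  rw [withDensity_apply _ hs, ← setLIntegral_const]
  exact setLIntegral_mono' hs ha

lemma measure_div_withDensity_apply_le_inv {α : Type*} [MeasurableSpace α] (μ : Measure α)
    {g : α → ℝ≥0∞} {s : Set α} (hs : MeasurableSet s) (hμs : μ s ≠ ∞) {a : ℝ≥0∞}
    (ha : ∀ y ∈ s, a ≤ g y) :
    μ s / μ.withDensity g s ≤ a⁻¹ := by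
  rcases eq_or_ne (μ s) 0 with h0 | h0
  · simp [h0]
  calc μ s / μ.withDensity g s ≤ μ s / (a * μ s) :=
        ENNReal.div_le_div_left (mul_measure_le_withDensity_apply μ hs ha) _
    _ = a⁻¹ := by rw [← one_div, ← ENNReal.mul_div_mul_right 1 a h0 hμs, one_mul]

def AntitoneNormOutside {E : Type*} [Norm E] (f : E → ℝ) (ρ : ℝ) : Prop :=
  ∀ ⦃y z : E⦄, ρ < ‖y‖ → ‖y‖ ≤ ‖z‖ → f z ≤ f y

lemma antitoneNormOutside_max {E : Type*} [SeminormedAddCommGroup E] {f : E → ℝ} {h : ℝ → ℝ}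
    {R N : ℝ} (hmono : AntitoneOn h (Ioi R)) (hrad : ∀ x : E, x ∉ ball 0 N → f x = h ‖x‖) :
    AntitoneNormOutside f (max R N) := by
  have hf : ∀ w : E, max R N < ‖w‖ → f w = h ‖w‖ := fun w hw =>
    hrad w (by simpa using (le_max_right R N).trans hw.le)
  intro y z hy hyz
  have hR : R < ‖y‖ := (le_max_left R N).trans_lt hy
  rw [hf z (hy.trans_le hyz), hf y hy]
  exact hmono hR (hR.trans_le hyz) hyz

lemma measure_ball_div_withDensity_le_inv {E : Type*} [SeminormedAddCommGroup E] [ProperSpace E]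
    [MeasurableSpace E] [OpensMeasurableSpace E] (μ : Measure E) [IsFiniteMeasureOnCompacts μ]
    {f : E → ℝ} {ρ : ℝ} (hf : AntitoneNormOutside f ρ) {x z : E} {t : ℝ}
    (hin : ρ < ‖x‖ - t) (hout : ‖x‖ + t ≤ ‖z‖) :
    μ (ball x t) / μ.withDensity (fun y => ENNReal.ofReal (f y)) (ball x t)
      ≤ (ENNReal.ofReal (f z))⁻¹ := by
  refine measure_div_withDensity_apply_le_inv μ measurableSet_ball measure_ball_lt_top.ne
    fun y hy => ENNReal.ofReal_le_ofReal (hf ?_ ?_)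
  · have := norm_lt_of_mem_ball (mem_ball_comm.mp hy)
    linarith
  · exact (norm_lt_of_mem_ball hy).le.trans hout

theorem stmt_7_general {d : ℕ} (r s : ℝ) (hr : 0 < r) (hs : 0 < s)
    (f : EuclideanSpace ℝ (Fin d) → ℝ)
    (P : Measure (EuclideanSpace ℝ (Fin d)))
    (hP : P = volume.withDensity fun x => ENNReal.ofReal (f x))
    (N R : ℝ)
    (h : ℝ → ℝ) (hmono : AntitoneOn h (Ioi R))
    (hrad : ∀ x : EuclideanSpace ℝ (Fin d), x ∉ Metric.ball (0 : EuclideanSpace ℝ (Fin d)) N →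
      f x = h ‖x‖)
    (θ : ℝ) (μ : EuclideanSpace ℝ (Fin d))
    (c : ℝ) (hc : 1 < c)
    (hint : (∫⁻ x, ENNReal.ofReal (f (c • x)) ^ (-(s / ((d : ℝ) + r)))
        ∂(Pdil P θ μ)) < ⊤) :
    H2 P θ μ s r := by
  set p := s / ((d : ℝ) + r)
  set b := min (1 / 4 : ℝ) ((c - 1) / 2)
  set M := max 1 (2 * max R N)
  have hb : 0 < b := lt_min (by norm_num) (by linarith)
  have hb4 : b ≤ 1 / 4 := min_le_left _ _
  have hbc : 2 * b ≤ c - 1 := by linarith [min_le_right (1 / 4 : ℝ) ((c - 1) / 2)]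
  have hM : 2 * max R N ≤ M := le_max_right _ _
  have hpointwise : ∀ x : EuclideanSpace ℝ (Fin d), M < ‖x‖ →
      (⨆ t ∈ Ioc (0 : ℝ) (2 * b * ‖x‖), volume (ball x t) / P (ball x t)) ^ p
        ≤ ENNReal.ofReal (f (c • x)) ^ (-p) := by
    intro x hx
    rw [ENNReal.rpow_neg, ← ENNReal.inv_rpow, hP]
    refine ENNReal.rpow_le_rpow (iSup₂_le fun t ht => ?_) (by positivity)
    refine measure_ball_div_withDensity_le_inv volume (antitoneNormOutside_max hmono hrad) ?_ ?_
    · nlinarith [ht.2, mul_le_mul_of_nonneg_right hb4 (norm_nonneg x)]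
    · rw [norm_smul, Real.norm_of_nonneg (by linarith)]
      nlinarith [ht.2, mul_le_mul_of_nonneg_right hbc (norm_nonneg x)]
  refine ⟨b, ⟨hb, by linarith⟩, M, lt_max_of_lt_left one_pos, ?_⟩
  calc _ ≤ ∫⁻ x in {x : EuclideanSpace ℝ (Fin d) | M < ‖x‖},
          ENNReal.ofReal (f (c • x)) ^ (-p) ∂(Pdil P θ μ) :=
        setLIntegral_mono' (measurableSet_lt measurable_const measurable_norm) hpointwise
    _ ≤ ∫⁻ x, ENNReal.ofReal (f (c • x)) ^ (-p) ∂(Pdil P θ μ) := setLIntegral_le_lintegral _ _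
    _ < ⊤ := hint

/-- **Criterion 3.1, distributions with radial tails.**
Let `r, s > 0`, `P = f·λ_d` with `E|X|^{r+η} < ∞`.  Suppose `f = h(|·|)` outside
`B(0,N)` for some decreasing `h : (R,∞) → ℝ₊`, and let `(θ,μ)` be `P`-admissible
with `∫ f(cx)^{-s/(d+r)} dP_{θ,μ}(x) < ∞` for some `c > 1`.  Then (H2) holds. -/
theorem stmt_7 {d : ℕ} (hd : 1 ≤ d) (r s : ℝ) (hr : 0 < r) (hs : 0 < s)
    (f : EuclideanSpace ℝ (Fin d) → ℝ) (hf0 : ∀ x, 0 ≤ f x) (hfm : Measurable f)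
    (P : Measure (EuclideanSpace ℝ (Fin d))) [IsProbabilityMeasure P]
    (hP : P = volume.withDensity fun x => ENNReal.ofReal (f x))
    (η : ℝ) (hη : 0 < η)
    (hmom : (∫⁻ x, ENNReal.ofReal ‖x‖ ^ (r + η) ∂P) ≠ ⊤)
    (N R : ℝ) (hN : 0 ≤ N) (hR : 0 ≤ R)
    (h : ℝ → ℝ) (hh0 : ∀ t ∈ Ioi R, 0 ≤ h t) (hmono : AntitoneOn h (Ioi R))
    (hrad : ∀ x : EuclideanSpace ℝ (Fin d), x ∉ Metric.ball (0 : EuclideanSpace ℝ (Fin d)) N →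
      f x = h ‖x‖)
    (θ : ℝ) (hθ : 0 < θ) (μ : EuclideanSpace ℝ (Fin d)) (hadm : Admissible f θ μ)
    (c : ℝ) (hc : 1 < c)
    (hint : (∫⁻ x, ENNReal.ofReal (f (c • x)) ^ (-(s / ((d : ℝ) + r)))
        ∂(Pdil P θ μ)) < ⊤) :
    H2 P θ μ s r :=
  stmt_7_general r s hr hs f P hP N R h hmono hrad θ μ c hc hint
end
end

section
/- Let r, s > 0 and let P = f·λ_d be a probability measure on ℝ^d with ∫ |x|^{r+η} dP(x) < ∞ for some η > 0. Let (θ,μ) be a P-admissible couple such that sup{ f(μ+θ(z−μ))/f(z) : z ≠ 0, f(z) > 0 } < ∞. Assume inf{ λ_d(supp P ∩ B(x,ρ))/λ_d(B(x,ρ)) : x ∈ supp P, ρ > 0 } > 0, and that f satisfies a local growth control assumption: there exist ε ≥ 0, η' ∈ (0,1/2), M > 0 and C > 0 such that for all x, y ∈ supp P with |x| ≥ M and |y−x| ≤ 2η'|x| one has f(y) ≥ C f(x)^{1+ε}. If ∫ f(x)^{−s(1+ε)/(d+r)} dP(x) < ∞, then hypothesis (H2) holds, i.e. there exist b ∈ (0,1/2)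 and M' > 0 such that ∫_{{|x|>M'}} ( sup_{0<t≤2b|x|} λ_d(B(x,t))/P(B(x,t)) )^{s/(d+r)} dP_{θ,μ}(x) < ∞. -/
open MeasureTheory ENNReal Filter Set Metric Topology
open scoped Classical

noncomputable section

/-! For `P`-a.e. `x`, the point `y = (x-μ)/θ + μ` lies in `supp P`. On a ball `B(y,t)` with
`t ≤ 2η'|y|` the growth control gives `f ≥ C f(y)^{1+ε}` on `supp P ∩ B(y,t)`, a set filling a
fixed proportion `c` of the ball, so `λ_d(B(y,t)) / P(B(y,t)) ≤ (c C f(y)^{1+ε})⁻¹`. The ratio bound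
on `f` along the homothety gives `f(x) ≤ K f(y)`, so the integrand of (H2) at `y` is at most a
constant times `f(x)^{-s(1+ε)/(d+r)}`, which is `P`-integrable by assumption. -/

lemma ENNReal.div_le_inv_of_mul_le {a b c : ℝ≥0∞} (h : a * b ≤ c) : b / c ≤ a⁻¹ := by
  rw [ENNReal.le_inv_iff_mul_le, div_eq_mul_inv, mul_right_comm, ← div_eq_mul_inv]
  exact ENNReal.div_le_of_le_mul (by rwa [one_mul, mul_comm])

lemma ENNReal.inv_mul_rpow_rpow {k b : ℝ≥0∞} (hb0 : b ≠ 0) (hbtop : b ≠ ⊤) (p : ℝ) {q : ℝ}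
    (hq : 0 ≤ q) : (k * b ^ p)⁻¹ ^ q = k⁻¹ ^ q * b ^ (-(p * q)) := by
  have hbp0 : b ^ p ≠ 0 := (ENNReal.rpow_pos (pos_iff_ne_zero.2 hb0) hbtop).ne'
  have hbptop : b ^ p ≠ ⊤ := ENNReal.rpow_ne_top_of_ne_zero hb0 hbtop
  rw [ENNReal.mul_inv (Or.inr hbptop) (Or.inr hbp0), ENNReal.mul_rpow_of_nonneg _ _ hq,
    ← ENNReal.rpow_neg, ← ENNReal.rpow_mul, neg_mul]

lemma div_rpow_mul_rpow_le_of_le_mul {u v C K p : ℝ} (hC : 0 ≤ C) (hK : 0 < K) (hp : 0 ≤ p)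
    (hu : 0 ≤ u) (huv : u ≤ K * v) : C / K ^ p * u ^ p ≤ C * v ^ p :=
  calc C / K ^ p * u ^ p = C * (u / K) ^ p := by rw [Real.div_rpow hu hK.le]; ring
    _ ≤ C * v ^ p := by
      gcongr
      rwa [div_le_iff₀' hK]

lemma inv_ofReal_mul_rpow_le_of_le_mul {u v C K p q : ℝ} (c : ℝ≥0∞) (hC : 0 ≤ C) (hK : 0 < K)
    (hp : 0 ≤ p) (hq : 0 ≤ q) (hu : 0 < u) (huv : u ≤ K * v) :
    (ENNReal.ofReal (C * v ^ p) * c)⁻¹ ^ q ≤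
      (ENNReal.ofReal (C / K ^ p) * c)⁻¹ ^ q * ENNReal.ofReal u ^ (-(p * q)) :=
  calc (ENNReal.ofReal (C * v ^ p) * c)⁻¹ ^ q
      ≤ (ENNReal.ofReal (C / K ^ p) * c * ENNReal.ofReal u ^ p)⁻¹ ^ q := by
        rw [mul_right_comm, ENNReal.ofReal_rpow_of_pos hu, ← ENNReal.ofReal_mul (by positivity)]
        gcongr (ENNReal.ofReal ?_ * c)⁻¹ ^ q
        exact div_rpow_mul_rpow_le_of_le_mul hC hK hp hu.le huv
    _ = _ := ENNReal.inv_mul_rpow_rpow (ENNReal.ofReal_pos.2 hu).ne' ENNReal.ofReal_ne_top p hq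

lemma exists_pos_le_mul_of_div_le {X : Type*} {u v : X → ℝ} {p : X → Prop}
    (h : ∃ C : ℝ, ∀ z, p z → 0 < v z → u z / v z ≤ C) :
    ∃ K > 0, ∀ z, p z → 0 < v z → u z ≤ K * v z := by
  obtain ⟨C, hC⟩ := h
  refine ⟨max C 1, one_pos.trans_le (le_max_right _ _), fun z hz hv => ?_⟩
  rw [← div_le_iff₀ hv]
  exact (hC z hz hv).trans (le_max_left _ _)

section WithDensity

variable {X : Type*} [MeasurableSpace X] {ν : Measure X} {g : X → ℝ≥0∞}

lemma mul_le_withDensity_apply {S B : Set X} {a c : ℝ≥0∞} (hSB : MeasurableSet (S ∩ B))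
    (hg : ∀ z ∈ S ∩ B, a ≤ g z) (hc : c * ν B ≤ ν (S ∩ B)) :
    a * c * ν B ≤ ν.withDensity g B :=
  calc a * c * ν B ≤ a * ν (S ∩ B) := by rw [mul_assoc]; gcongr
    _ = ∫⁻ _ in S ∩ B, a ∂ν := (setLIntegral_const _ _).symm
    _ ≤ ∫⁻ z in S ∩ B, g z ∂ν := setLIntegral_mono' hSB hg
    _ ≤ ∫⁻ z in B, g z ∂ν := lintegral_mono' (Measure.restrict_mono inter_subset_right le_rfl) le_rfl
    _ ≤ ν.withDensity g B := withDensity_apply_le _ _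

lemma ae_ne_zero_imp_mem_support_withDensity [TopologicalSpace X] [HereditarilyLindelofSpace X]
    (hg : Measurable g) : ∀ᵐ x ∂ν, g x ≠ 0 → x ∈ (ν.withDensity g).support :=
  (ae_withDensity_iff hg).1 Measure.support_mem_ae

lemma iSup_measure_ball_div_withDensity_le [PseudoMetricSpace X] [OpensMeasurableSpace X]
    {S : Set X} (hS : MeasurableSet S) {y : X} {ρ : ℝ} {a c : ℝ≥0∞}
    (hc : ∀ t ∈ Ioc 0 ρ, c * ν (ball y t) ≤ ν (S ∩ ball y t))
    (hg : ∀ z ∈ S, dist z y ≤ ρ → a ≤ g z) :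
    ⨆ t ∈ Ioc (0 : ℝ) ρ, ν (ball y t) / ν.withDensity g (ball y t) ≤ (a * c)⁻¹ := by
  refine iSup₂_le fun t ht => ENNReal.div_le_inv_of_mul_le ?_
  refine mul_le_withDensity_apply (hS.inter measurableSet_ball) (fun z hz => ?_) (hc t ht)
  exact hg z hz.1 ((mem_ball.1 hz.2).le.trans ht.2)

end WithDensity

lemma setLIntegral_map_lt_top_of_ae_le_const_mul {X Y : Type*} [MeasurableSpace X]
    [MeasurableSpace Y] {ν : Measure X} {T : X → Y} {S : Set Y} (hS : MeasurableSet S)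
    {G : Y → ℝ≥0∞} {F : X → ℝ≥0∞} {K : ℝ≥0∞} (hK : K ≠ ⊤)
    (hle : ∀ᵐ x ∂ν, S.indicator G (T x) ≤ K * F x) (hF : ∫⁻ x, F x ∂ν < ⊤) :
    ∫⁻ y in S, G y ∂(ν.map T) < ⊤ := by
  rw [← lintegral_indicator hS]
  calc ∫⁻ y, S.indicator G y ∂(ν.map T) ≤ ∫⁻ x, S.indicator G (T x) ∂ν := lintegral_map_le _ _
    _ ≤ ∫⁻ x, K * F x ∂ν := lintegral_mono_ae hle
    _ = K * ∫⁻ x, F x ∂ν := lintegral_const_mul' K _ hK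
    _ < ⊤ := ENNReal.mul_lt_top hK.lt_top hF

lemma quasiMeasurePreserving_add_smul_sub {E : Type*} [NormedAddCommGroup E]
    [NormedSpace ℝ E] [MeasurableSpace E] [BorelSpace E] [FiniteDimensional ℝ E]
    (ν : Measure E) [ν.IsAddHaarMeasure] (c : E) {a : ℝ} (ha : a ≠ 0) :
    Measure.QuasiMeasurePreserving (fun x => c + a • (x - c)) ν ν :=
  (measurePreserving_add_left ν c).quasiMeasurePreserving.comp <|
    (Measure.quasiMeasurePreserving_smul ν ha).comp
      (measurePreserving_sub_right ν c).quasiMeasurePreserving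

section Euclidean

variable {d : ℕ}

lemma msupp_eq_support (P : Measure (EuclideanSpace ℝ (Fin d))) : msupp P = P.support := by
  ext x
  rw [nhds_basis_ball.mem_measureSupport]
  rfl

lemma isClosed_msupp (P : Measure (EuclideanSpace ℝ (Fin d))) : IsClosed (msupp P) :=
  msupp_eq_support P ▸ Measure.isClosed_support

variable {f : EuclideanSpace ℝ (Fin d) → ℝ} {P : Measure (EuclideanSpace ℝ (Fin d))}

lemma ae_pos_and_homothety_mem_msupp (hfm : Measurable f)
    (hP : P = volume.withDensity fun x => ENNReal.ofReal (f x)) {θ : ℝ} (hθ : θ ≠ 0)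
    {μ : EuclideanSpace ℝ (Fin d)} (hadm : Admissible f θ μ) :
    ∀ᵐ x ∂P, 0 < f x ∧ 0 < f (μ + θ⁻¹ • (x - μ)) ∧ μ + θ⁻¹ • (x - μ) ∈ msupp P := by
  have hsupp := (quasiMeasurePreserving_add_smul_sub volume μ (inv_ne_zero hθ)).ae
    (ae_ne_zero_imp_mem_support_withDensity hfm.ennreal_ofReal)
  rw [hP, msupp_eq_support, ae_withDensity_iff hfm.ennreal_ofReal]
  filter_upwards [hadm, hsupp] with x hxT hTsupp hx
  have hx : 0 < f x := ENNReal.ofReal_pos.1 (pos_iff_ne_zero.2 hx)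
  exact ⟨hx, hxT hx, hTsupp (ENNReal.ofReal_pos.2 (hxT hx)).ne'⟩

lemma iSup_volume_ball_div_le_of_le_on_msupp
    (hP : P = volume.withDensity fun x => ENNReal.ofReal (f x)) {y : EuclideanSpace ℝ (Fin d)}
    {c : ℝ≥0∞} (hc : ∀ ρ > (0 : ℝ), c ≤ volume (msupp P ∩ ball y ρ) / volume (ball y ρ))
    {ρ a : ℝ} (hf : ∀ z ∈ msupp P, ‖z - y‖ ≤ ρ → a ≤ f z) :
    ⨆ t ∈ Ioc (0 : ℝ) ρ, volume (ball y t) / P (ball y t) ≤ (ENNReal.ofReal a * c)⁻¹ := by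
  rw [hP]
  refine iSup_measure_ball_div_withDensity_le (isClosed_msupp P).measurableSet
    (fun t ht => ?_) fun z hz hzy => ENNReal.ofReal_le_ofReal (hf z hz (by rwa [← dist_eq_norm]))
  rw [← ENNReal.le_div_iff_mul_le (Or.inl (measure_ball_pos _ _ ht.1).ne')
    (Or.inl measure_ball_lt_top.ne)]
  exact hc t ht.1

end Euclidean

theorem stmt_8_general {d : ℕ} (r s : ℝ) (hr : 0 < r) (hs : 0 < s)
    (f : EuclideanSpace ℝ (Fin d) → ℝ) (hfm : Measurable f)
    (P : Measure (EuclideanSpace ℝ (Fin d)))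
    (hP : P = volume.withDensity fun x => ENNReal.ofReal (f x))
    (θ : ℝ) (hθ : 0 < θ) (μ : EuclideanSpace ℝ (Fin d)) (hadm : Admissible f θ μ)
    (hbd : ∃ C : ℝ, ∀ z : EuclideanSpace ℝ (Fin d), z ≠ 0 → 0 < f z →
      f (μ + θ • (z - μ)) / f z ≤ C)
    (hinf : ∃ c : ℝ≥0∞, 0 < c ∧ ∀ x ∈ msupp P, ∀ ρ > (0 : ℝ),
      c ≤ volume (msupp P ∩ Metric.ball x ρ) / volume (Metric.ball x ρ))
    (ε : ℝ) (hε : 0 ≤ ε) (η' : ℝ) (hη' : η' ∈ Ioo (0 : ℝ) (1 / 2))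
    (M C : ℝ) (hM : 0 < M) (hC : 0 < C)
    (hgrowth : ∀ x ∈ msupp P, ∀ y ∈ msupp P,
      M ≤ ‖x‖ → ‖y - x‖ ≤ 2 * η' * ‖x‖ → C * f x ^ (1 + ε) ≤ f y)
    (hint : (∫⁻ x, ENNReal.ofReal (f x) ^ (-(s * (1 + ε) / ((d : ℝ) + r))) ∂P) < ⊤) :
    H2 P θ μ s r := by
  obtain ⟨K₀, hK₀, hK₀le⟩ := exists_pos_le_mul_of_div_le hbd
  obtain ⟨c, hc0, hc⟩ := hinf
  set q := s / ((d : ℝ) + r)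
  have hq : 0 ≤ q := by positivity
  rw [show s * (1 + ε) / ((d : ℝ) + r) = (1 + ε) * q by ring] at hint
  set T : EuclideanSpace ℝ (Fin d) → EuclideanSpace ℝ (Fin d) := fun x => μ + θ⁻¹ • (x - μ)
  set K := (ENNReal.ofReal (C / K₀ ^ (1 + ε)) * c)⁻¹ ^ q
  have hK : K ≠ ⊤ := ENNReal.rpow_ne_top_of_nonneg hq <| ENNReal.inv_ne_top.2 <|
    mul_ne_zero (ENNReal.ofReal_pos.2 (by positivity)).ne' hc0.ne'
  refine ⟨η', hη', M, hM, setLIntegral_map_lt_top_of_ae_le_const_mul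
    (measurableSet_lt measurable_const measurable_norm) hK ?_ hint⟩
  filter_upwards [ae_pos_and_homothety_mem_msupp hfm hP hθ.ne' hadm] with x ⟨hx, hTx, hTsupp⟩
  by_cases hTxM : M < ‖T x‖
  · rw [indicator_of_mem (show T x ∈ {y | M < ‖y‖} from hTxM)]
    have hxT : f x ≤ K₀ * f (T x) := by
      simpa [T, smul_smul, hθ.ne'] using hK₀le (T x) (norm_pos_iff.1 (hM.trans hTxM)) hTx
    have hratio := iSup_volume_ball_div_le_of_le_on_msupp hP (hc _ hTsupp)
      fun z hz hzT => hgrowth (T x) hTsupp z hz hTxM.le hzT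
    exact (ENNReal.rpow_le_rpow hratio hq).trans
      (inv_ofReal_mul_rpow_le_of_le_mul c hC.le hK₀ (by positivity) hq hx hxT)
  · rw [indicator_of_notMem (show T x ∉ {y | M < ‖y‖} from hTxM)]
    exact zero_le

/-- **Criterion 3.2, local growth control.**
Let `r, s > 0`, `P = f·λ_d` with `∫|x|^{r+η} dP < ∞`.  Let `(θ,μ)` be
`P`-admissible with `sup { f(μ+θ(z-μ))/f(z) : z ≠ 0, f(z) > 0 } < ∞`.  Assume
`inf { λ_d(supp P ∩ B(x,ρ))/λ_d(B(x,ρ)) : x ∈ supp P, ρ > 0 } > 0` and the local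
growth control: there are `ε ≥ 0`, `η' ∈ (0,1/2)`, `M, C > 0` such that for all
`x, y ∈ supp P` with `|x| ≥ M` and `|y-x| ≤ 2η'|x|`, `f(y) ≥ C f(x)^{1+ε}`.
If `∫ f^{-s(1+ε)/(d+r)} dP < ∞`, then (H2) holds. -/
theorem stmt_8 {d : ℕ} (hd : 1 ≤ d) (r s : ℝ) (hr : 0 < r) (hs : 0 < s)
    (f : EuclideanSpace ℝ (Fin d) → ℝ) (hf0 : ∀ x, 0 ≤ f x) (hfm : Measurable f)
    (P : Measure (EuclideanSpace ℝ (Fin d))) [IsProbabilityMeasure P]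
    (hP : P = volume.withDensity fun x => ENNReal.ofReal (f x))
    (η : ℝ) (hη : 0 < η)
    (hmom : (∫⁻ x, ENNReal.ofReal ‖x‖ ^ (r + η) ∂P) ≠ ⊤)
    (θ : ℝ) (hθ : 0 < θ) (μ : EuclideanSpace ℝ (Fin d)) (hadm : Admissible f θ μ)
    (hbd : ∃ C : ℝ, ∀ z : EuclideanSpace ℝ (Fin d), z ≠ 0 → 0 < f z →
      f (μ + θ • (z - μ)) / f z ≤ C)
    (hinf : ∃ c : ℝ≥0∞, 0 < c ∧ ∀ x ∈ msupp P, ∀ ρ > (0 : ℝ),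
      c ≤ volume (msupp P ∩ Metric.ball x ρ) / volume (Metric.ball x ρ))
    (ε : ℝ) (hε : 0 ≤ ε) (η' : ℝ) (hη' : η' ∈ Ioo (0 : ℝ) (1 / 2))
    (M C : ℝ) (hM : 0 < M) (hC : 0 < C)
    (hgrowth : ∀ x ∈ msupp P, ∀ y ∈ msupp P,
      M ≤ ‖x‖ → ‖y - x‖ ≤ 2 * η' * ‖x‖ → C * f x ^ (1 + ε) ≤ f y)
    (hint : (∫⁻ x, ENNReal.ofReal (f x) ^ (-(s * (1 + ε) / ((d : ℝ) + r))) ∂P) < ⊤) :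
    H2 P θ μ s r :=
  stmt_8_general r s hr hs f hfm P hP θ hθ μ hadm hbd hinf ε hε η' hη' M C hM hC hgrowth hint
end
end
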